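/- Let L₀ = Z_p⁴ and L₁ = Z_p ⊕ Z_p ⊕ pZ_p ⊕ pZ_p with the standard symplectic pairing, so pL₀ ⊂ L₁ ⊂ L₀. Suppose x, y ∈ L₀ and z, w ∈ L₁ satisfy ⟨x,y⟩ = 0, ⟨x,z⟩ = ⟨y,w⟩ = 1, ⟨x,w⟩ = ⟨y,z⟩ = 0 and ⟨z,w⟩ = 0. Then x, y, z, w form a Z_p-basis of L₀, and px, py, z, w form a Z_p-basis of L₁. -/

import Mathlib

/-- The standard symplectic pairing on `ℤ_p⁴` (0-indexed). -/
noncomputable def sp4 (p : ℕ) [Fact p.Prime] (x y : Fin 4 → ℤ_[p]) : ℤ_[p] :=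
  x 0 * y 3 + x 1 * y 2 - x 2 * y 1 - x 3 * y 0

/-- The Siegel-parahoric lattice `L₁ = ℤ_p ⊕ ℤ_p ⊕ pℤ_p ⊕ pℤ_p ⊆ L₀ = ℤ_p⁴`. -/
noncomputable def L1 (p : ℕ) [Fact p.Prime] : Submodule ℤ_[p] (Fin 4 → ℤ_[p]) where
  carrier := {x | (p : ℤ_[p]) ∣ x 2 ∧ (p : ℤ_[p]) ∣ x 3}
  add_mem' := fun ha hb => ⟨dvd_add ha.1 hb.1, dvd_add ha.2 hb.2⟩
  zero_mem' := ⟨dvd_zero _, dvd_zero _⟩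
  smul_mem' := fun c _ ha => ⟨ha.1.mul_left c, ha.2.mul_left c⟩

/-!
The Gram matrix of `x, y, z, w` under the pairing is the standard symplectic matrix, a unit. It
equals `M J Mᵀ` for the coordinate matrix `M` of the family, so `det M` is a unit and the family
is a basis of `L₀`. In this basis the `x`- and `y`-coordinates of `u` are `⟨u, z⟩` and `⟨u, w⟩`,
which lie in `pℤ_p` when `u ∈ L₁`; hence `px, py, z, w` span `L₁`.
-/

open Matrix Module

section Gram
variable {n R : Type*} [Fintype n] [DecidableEq n] [CommRing R]

theorem Matrix.of_toBilin'_eq_mul_mul_transpose (J : Matrix n n R) (v : n → n → R) :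
    of (fun i j => toBilin' J (v i) (v j)) = of v * J * (of v)ᵀ := by
  ext i j
  simp only [of_apply, toBilin'_apply', mul_apply, transpose_apply, dotProduct, mulVec,
    Finset.mul_sum, Finset.sum_mul, mul_assoc]
  exact Finset.sum_comm

theorem Matrix.isUnit_det_of_isUnit_det_gram (β : LinearMap.BilinForm R (n → R)) (v : n → n → R)
    (h : IsUnit (of fun i j => β (v i) (v j)).det) : IsUnit (of v).det := by
  rw [← toBilin'_toMatrix' β, of_toBilin'_eq_mul_mul_transpose, det_mul, det_mul,
    det_transpose] at h
  exact isUnit_of_mul_isUnit_left (isUnit_of_mul_isUnit_left h)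

theorem Pi.exists_basis_of_isUnit_det {v : n → n → R} (h : IsUnit (of v).det) :
    ∃ B : Basis n R (n → R), ⇑B = v := by
  have hv : IsUnit ((Pi.basisFun R n).det v) := by
    rwa [Basis.det_apply, ← det_transpose]
  obtain ⟨hli, hsp⟩ := (Pi.basisFun R n).is_basis_iff_det.mpr hv
  exact ⟨Basis.mk hli hsp.ge, Basis.coe_mk _ _⟩

end Gram

namespace Module.Basis
variable {ι R M : Type*} [CommRing R] [AddCommGroup M] [Module R M]

theorem repr_apply_eq_of_dual (B : Basis ι R M) (β : M →ₗ[R] M →ₗ[R] R) {i : ι} {d : M}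
    (hi : β (B i) d = 1) (hj : ∀ j ≠ i, β (B j) d = 0) (u : M) : B.repr u i = β u d := by
  rw [← B.coord_apply, show B.coord i = β.flip d from B.ext fun j => ?_]
  · rfl
  · obtain rfl | hji := eq_or_ne j i
    · simp [hi]
    · simp [hj j hji, Finsupp.single_eq_of_ne' hji]

theorem exists_basis_submodule_of_dvd_repr [Fintype ι] [NoZeroDivisors R] (B : Basis ι R M)
    {c : ι → R} (hc : ∀ i, c i ≠ 0) {N : Submodule R M} (hmem : ∀ i, c i • B i ∈ N)
    (hdvd : ∀ u ∈ N, ∀ i, c i ∣ B.repr u i) :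
    ∃ B' : Basis ι R N, ∀ i, (B' i : M) = c i • B i := by
  set v : ι → N := fun i => ⟨c i • B i, hmem i⟩
  have hli : LinearIndependent R v := by
    refine LinearIndependent.of_comp N.subtype (Fintype.linearIndependent_iff.mpr ?_)
    intro g hg i
    simp only [Function.comp_apply, Submodule.subtype_apply, v, smul_smul] at hg
    have hgc := Fintype.linearIndependent_iff.mp B.linearIndependent _ hg i
    exact (mul_eq_zero.mp hgc).resolve_right (hc i)
  have hsp : ⊤ ≤ Submodule.span R (Set.range v) := by
    rintro u -
    choose a ha using hdvd u u.2
    have hu : u = ∑ i, a i • v i := by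
      ext1
      simp only [Submodule.coe_sum, Submodule.coe_smul, v, smul_smul]
      conv_lhs => rw [← B.sum_repr u]
      simp only [ha, mul_comm]
    rw [hu]
    exact Submodule.sum_mem _ fun i _ => Submodule.smul_mem _ _ (Submodule.subset_span ⟨i, rfl⟩)
  exact ⟨Basis.mk hli hsp, fun i => by simp [v]⟩

end Module.Basis

section Sp4

variable (p : ℕ) [Fact p.Prime]

noncomputable def sp4Form : LinearMap.BilinForm ℤ_[p] (Fin 4 → ℤ_[p]) :=
  toBilin' !![0, 0, 0, 1; 0, 0, 1, 0; 0, -1, 0, 0; -1, 0, 0, 0]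

@[simp]
theorem sp4Form_apply (x y : Fin 4 → ℤ_[p]) : sp4Form p x y = sp4 p x y := by
  simp [sp4Form, toBilin'_apply', sp4, dotProduct, Fin.sum_univ_four, mulVec]
  ring

theorem sp4_swap (x y : Fin 4 → ℤ_[p]) : sp4 p y x = -sp4 p x y := by
  unfold sp4; ring

theorem sp4_self (x : Fin 4 → ℤ_[p]) : sp4 p x x = 0 := by
  unfold sp4; ring

theorem natCast_smul_mem_L1 (x : Fin 4 → ℤ_[p]) : (p : ℤ_[p]) • x ∈ L1 p :=
  ⟨Dvd.intro _ rfl, Dvd.intro _ rfl⟩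

theorem dvd_sp4_of_mem_L1 {u v : Fin 4 → ℤ_[p]} (hu : u ∈ L1 p) (hv : v ∈ L1 p) :
    (p : ℤ_[p]) ∣ sp4 p u v :=
  dvd_sub (dvd_sub (dvd_add (hv.2.mul_left _) (hv.1.mul_left _)) (hu.1.mul_right _))
    (hu.2.mul_right _)

theorem exists_basis_of_sp4_hyperbolic {x y z w : Fin 4 → ℤ_[p]} (hxy : sp4 p x y = 0)
    (hxz : sp4 p x z = 1) (hyw : sp4 p y w = 1) (hxw : sp4 p x w = 0) (hyz : sp4 p y z = 0)
    (hzw : sp4 p z w = 0) :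
    ∃ B : Basis (Fin 4) ℤ_[p] (Fin 4 → ℤ_[p]), ⇑B = ![x, y, z, w] := by
  refine Pi.exists_basis_of_isUnit_det (isUnit_det_of_isUnit_det_gram (sp4Form p) _ ?_)
  have hgram : of (fun i j => sp4Form p (![x, y, z, w] i) (![x, y, z, w] j)) =
      !![0, 0, 1, 0; 0, 0, 0, 1; -1, 0, 0, 0; 0, -1, 0, 0] := by
    ext i j
    fin_cases i <;> fin_cases j <;>
      simp [sp4_self, sp4_swap p x y, sp4_swap p x z, sp4_swap p x w, sp4_swap p y z,
        sp4_swap p y w, sp4_swap p z w, hxy, hxz, hyw, hxw, hyz, hzw]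
  rw [hgram]
  simp [det_succ_row_zero, Fin.sum_univ_succ, Fin.succAbove]

theorem repr_eq_sp4_of_sp4_hyperbolic {x y z w : Fin 4 → ℤ_[p]}
    (B : Basis (Fin 4) ℤ_[p] (Fin 4 → ℤ_[p])) (hB : ⇑B = ![x, y, z, w])
    (hxz : sp4 p x z = 1) (hyw : sp4 p y w = 1)
    (hxw : sp4 p x w = 0) (hyz : sp4 p y z = 0) (hzw : sp4 p z w = 0) (u : Fin 4 → ℤ_[p]) :
    B.repr u 0 = sp4 p u z ∧ B.repr u 1 = sp4 p u w := by
  constructor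
  · refine (B.repr_apply_eq_of_dual (sp4Form p) ?_ ?_ u).trans (sp4Form_apply p u z)
    · simp [hB, hxz]
    · intro j hj
      fin_cases j <;> simp_all [sp4_self, sp4_swap p z w]
  · refine (B.repr_apply_eq_of_dual (sp4Form p) ?_ ?_ u).trans (sp4Form_apply p u w)
    · simp [hB, hyw]
    · intro j hj
      fin_cases j <;> simp_all [sp4_self]

end Sp4

/-- Suppose `x, y ∈ L₀ = ℤ_p⁴` and `z, w ∈ L₁` satisfy `⟨x,y⟩ = 0`, `⟨x,z⟩ = ⟨y,w⟩ = 1`,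
`⟨x,w⟩ = ⟨y,z⟩ = 0` and `⟨z,w⟩ = 0`.  Then `x, y, z, w` form a `ℤ_p`-basis of `L₀`,
and `px, py, z, w` form a `ℤ_p`-basis of `L₁`. -/
theorem symplectic_quadruple_basis_of_L0_and_L1
    (p : ℕ) [Fact p.Prime]
    (x y z w : Fin 4 → ℤ_[p])
    (hz : z ∈ L1 p) (hw : w ∈ L1 p)
    (hxy : sp4 p x y = 0)
    (hxz : sp4 p x z = 1) (hyw : sp4 p y w = 1)
    (hxw : sp4 p x w = 0) (hyz : sp4 p y z = 0)
    (hzw : sp4 p z w = 0) :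
    (∃ B : Module.Basis (Fin 4) ℤ_[p] (Fin 4 → ℤ_[p]),
      B 0 = x ∧ B 1 = y ∧ B 2 = z ∧ B 3 = w) ∧
    (∃ B' : Module.Basis (Fin 4) ℤ_[p] ↥(L1 p),
      (B' 0 : Fin 4 → ℤ_[p]) = (p : ℤ_[p]) • x ∧
      (B' 1 : Fin 4 → ℤ_[p]) = (p : ℤ_[p]) • y ∧
      (B' 2 : Fin 4 → ℤ_[p]) = z ∧
      (B' 3 : Fin 4 → ℤ_[p]) = w) := by
  obtain ⟨B, hB⟩ := exists_basis_of_sp4_hyperbolic p hxy hxz hyw hxw hyz hzw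
  have hrepr := repr_eq_sp4_of_sp4_hyperbolic p B hB hxz hyw hxw hyz hzw
  have hp : (p : ℤ_[p]) ≠ 0 := Nat.cast_ne_zero.mpr (Fact.out : p.Prime).ne_zero
  obtain ⟨B', hB'⟩ := B.exists_basis_submodule_of_dvd_repr (c := ![(p : ℤ_[p]), p, 1, 1])
    (N := L1 p) (by simp [Fin.forall_fin_succ, hp])
    (by simp [Fin.forall_fin_succ, hB, natCast_smul_mem_L1, hz, hw])
    (fun u hu => by simp [Fin.forall_fin_succ, (hrepr u).1, (hrepr u).2,
      dvd_sp4_of_mem_L1 p hu hz, dvd_sp4_of_mem_L1 p hu hw])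
  exact ⟨⟨B, by simp [hB]⟩, ⟨B', by simp [hB', hB]⟩⟩
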